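/- Suppose all cluster centers of C*_P are distinct and the set A(C*_P) of optimal 0/1 assignments for fixed centers C*_P contains more than one element. Then A(C*_P) ∩ T(P) is nonempty, and transitioning from P to any P' ∈ A(C*_P) ∩ T(P) strictly decreases the clustering loss: F(P') < F(P). In particular, if (P, C*_P) is C-local with distinct centers, then A(C*_P) is a singleton. -/

import Mathlib

/-!
For fixed centers the loss is a sum of per-point costs, so optimal hard assignments can be spliced
point by point: two distinct optimal assignments yield an optimal `P'` that moves a single point
`x n₁` from cluster `i` to cluster `j` at equal cost `D (x n₁) (C i) = D (x n₁) (C j)`. As the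
centers are distinct and `D z y = 0 ↔ z = y`, `x n₁ ≠ C j`. Moving weight `t ∈ (0, 1]` of `x n₁`
into cluster `j` therefore shifts the weighted mean of that cluster away from `C j`, and since the
weighted mean is the unique minimiser of a weighted sum of Bregman divergences, re-centering lowers
the loss strictly below `f P C = F P`. Taking `t = 1` gives `F P' < F P`; letting `t → 0` gives
soft assignments arbitrarily close to `P` with smaller loss, which contradicts `C`-locality.
-/

open Finset

theorem exists_mem_Ioc_dist_lineMap_lt {V : Type*} [NormedAddCommGroup V] [NormedSpace ℝ V]
    (p q : V) {ε : ℝ} (hε : 0 < ε) :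
    ∃ t ∈ Set.Ioc (0 : ℝ) 1, dist (AffineMap.lineMap p q t) p < ε :=
  (Filter.Eventually.and (Ioc_mem_nhdsGT one_pos) <| Metric.tendsto_nhds.1
    ((AffineMap.lineMap_continuous.tendsto' 0 p (by simp)).mono_left nhdsWithin_le_nhds)
    ε hε).exists

section Bregman

variable {E : Type*} [NormedAddCommGroup E] [NormedSpace ℝ E] {s : Set E} {φ : E → ℝ}

section Gradient

variable {g : E →L[ℝ] ℝ} {y z : E}

theorem ConvexOn.apply_sub_le_of_hasFDerivAt (hφ : ConvexOn ℝ s φ) (hy : y ∈ s) (hz : z ∈ s)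
    (hg : HasFDerivAt φ g y) : g (z - y) ≤ φ z - φ y := by
  let γ : ℝ →ᵃ[ℝ] E := AffineMap.lineMap y z
  have hline : ConvexOn ℝ (Set.Icc 0 1) (φ ∘ γ) :=
    (hφ.comp_affineMap γ).subset (fun t ht => hφ.1.lineMap_mem hy hz ht) (convex_Icc 0 1)
  have hderiv : HasDerivAt (φ ∘ γ) (g (z - y)) 0 := by
    rw [← AffineMap.lineMap_apply_zero y z (k := ℝ)] at hg
    exact hg.comp_hasDerivAt 0 AffineMap.hasDerivAt_lineMap
  simpa [γ, slope_def_field] using hline.le_slope_of_hasDerivAt (Set.left_mem_Icc.2 zero_le_one)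
    (Set.right_mem_Icc.2 zero_le_one) zero_lt_one hderiv

theorem StrictConvexOn.apply_sub_lt_of_hasFDerivAt (hφ : StrictConvexOn ℝ s φ) (hy : y ∈ s)
    (hz : z ∈ s) (hzy : z ≠ y) (hg : HasFDerivAt φ g y) : g (z - y) < φ z - φ y := by
  have hhalf : (0 : ℝ) < 2⁻¹ := by norm_num
  have hlt := hφ.2 hy hz hzy.symm hhalf hhalf (by norm_num)
  have hle := hφ.convexOn.apply_sub_le_of_hasFDerivAt hy (hφ.1 hy hz hhalf.le hhalf.le
    (by norm_num)) hg
  rw [show (2⁻¹ : ℝ) • y + (2⁻¹ : ℝ) • z - y = (2⁻¹ : ℝ) • (z - y) by module,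
    map_smul, smul_eq_mul] at hle
  simp only [smul_eq_mul] at hlt
  linarith

end Gradient

variable (φ) in
def bregmanDiv (f' : E → E →L[ℝ] ℝ) (z y : E) : ℝ :=
  φ z - φ y - f' y (z - y)

variable {f' : E → E →L[ℝ] ℝ}

theorem bregmanDiv_nonneg (hφ : ConvexOn ℝ s φ) {y z : E} (hy : y ∈ s) (hz : z ∈ s)
    (hdy : HasFDerivAt φ (f' y) y) : 0 ≤ bregmanDiv φ f' z y := by
  unfold bregmanDiv
  linarith [hφ.apply_sub_le_of_hasFDerivAt hy hz hdy]

theorem bregmanDiv_eq_zero_iff (hφ : StrictConvexOn ℝ s φ) {y z : E} (hy : y ∈ s) (hz : z ∈ s)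
    (hdy : HasFDerivAt φ (f' y) y) : bregmanDiv φ f' z y = 0 ↔ z = y := by
  refine ⟨fun h => by_contra fun hzy => ?_, fun h => by simp [bregmanDiv, h]⟩
  unfold bregmanDiv at h
  linarith [hφ.apply_sub_lt_of_hasFDerivAt hy hz hzy hdy]

variable {ι : Type*} [Fintype ι]

theorem sum_mul_bregmanDiv_eq_centerMass_add (a : ι → ℝ) (x : ι → E) (ha : ∑ i, a i ≠ 0)
    (c : E) :
    ∑ i, a i * bregmanDiv φ f' (x i) c = ∑ i, a i * bregmanDiv φ f' (x i) (univ.centerMass a x) +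
      (∑ i, a i) * bregmanDiv φ f' (univ.centerMass a x) c := by
  set μ := univ.centerMass a x
  have hμ : ∑ i, a i • x i = (∑ i, a i) • μ := (smul_inv_smul₀ ha _).symm
  have hlin (e : E) : ∑ i, a i * f' e (x i - e) = (∑ i, a i) * f' e (μ - e) := by
    simp only [← smul_eq_mul, ← map_smul, ← map_sum, smul_sub, sum_sub_distrib, ← sum_smul, hμ]
  simp only [bregmanDiv, mul_sub, sum_sub_distrib, ← sum_mul, hlin, sub_self, map_zero, mul_zero]
  ring

theorem sum_mul_bregmanDiv_centerMass_le (hφ : ConvexOn ℝ s φ) {a : ι → ℝ} (ha : ∀ i, 0 ≤ a i)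
    (hsum : 0 < ∑ i, a i) {x : ι → E} (hx : ∀ i, x i ∈ s) {c : E} (hc : c ∈ s)
    (hdc : HasFDerivAt φ (f' c) c) :
    ∑ i, a i * bregmanDiv φ f' (x i) (univ.centerMass a x) ≤
      ∑ i, a i * bregmanDiv φ f' (x i) c := by
  have hμ : univ.centerMass a x ∈ s :=
    hφ.1.centerMass_mem (fun i _ => ha i) hsum fun i _ => hx i
  rw [sum_mul_bregmanDiv_eq_centerMass_add a x hsum.ne' c]
  nlinarith [bregmanDiv_nonneg hφ hc hμ hdc]

theorem sum_mul_bregmanDiv_centerMass_lt (hφ : StrictConvexOn ℝ s φ) {a : ι → ℝ}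
    (ha : ∀ i, 0 ≤ a i) (hsum : 0 < ∑ i, a i) {x : ι → E} (hx : ∀ i, x i ∈ s) {c : E}
    (hc : c ∈ s) (hdc : HasFDerivAt φ (f' c) c) (hne : univ.centerMass a x ≠ c) :
    ∑ i, a i * bregmanDiv φ f' (x i) (univ.centerMass a x) <
      ∑ i, a i * bregmanDiv φ f' (x i) c := by
  have hμ : univ.centerMass a x ∈ s :=
    hφ.1.centerMass_mem (fun i _ => ha i) hsum fun i _ => hx i
  have hpos : 0 < bregmanDiv φ f' (univ.centerMass a x) c :=
    (bregmanDiv_nonneg hφ.convexOn hc hμ hdc).lt_of_ne'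
      ((bregmanDiv_eq_zero_iff hφ hc hμ hdc).not.2 hne)
  rw [sum_mul_bregmanDiv_eq_centerMass_add a x hsum.ne' c]
  nlinarith

theorem centerMass_add_single_ne [DecidableEq ι] {a : ι → ℝ} {x : ι → E} {i₀ : ι} {c : ℝ}
    (ha : ∑ i, a i ≠ 0) (hac : ∑ i, a i + c ≠ 0) (hc : c ≠ 0)
    (hx : x i₀ ≠ univ.centerMass a x) :
    univ.centerMass (a + Pi.single i₀ c) x ≠ univ.centerMass a x := by
  intro h
  have hsmul : ∀ b : ι → ℝ, ∑ i, b i ≠ 0 → ∑ i, b i • x i = (∑ i, b i) • univ.centerMass b x :=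
    fun b hb => (smul_inv_smul₀ hb _).symm
  have hsum : ∑ i, (a + Pi.single i₀ c : ι → ℝ) i = ∑ i, a i + c := by simp [sum_add_distrib]
  have key : ∑ i, (a + Pi.single i₀ c : ι → ℝ) i • x i = ∑ i, a i • x i + c • x i₀ := by
    simp [add_smul, sum_add_distrib, Pi.single_apply]
  rw [hsmul _ (hsum ▸ hac), hsmul a ha, hsum, h, add_smul, add_right_inj] at key
  exact hx (smul_right_injective E hc key).symm

end Bregman

section Assignments

variable {κ ι : Type*} [Fintype κ] {Q R : κ → ι → ℝ}

variable (κ ι) in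
def hardAssignments : Set (κ → ι → ℝ) :=
  {Q | (∀ n, ∑ k, Q k n = 1) ∧ ∀ k n, Q k n = 0 ∨ Q k n = 1}

variable (κ ι) in
def softAssignments : Set (κ → ι → ℝ) :=
  {Q | (∀ n, ∑ k, Q k n = 1) ∧ ∀ k n, 0 ≤ Q k n}

theorem hardAssignments_subset_softAssignments : hardAssignments κ ι ⊆ softAssignments κ ι :=
  fun Q hQ => ⟨hQ.1, fun k n => by rcases hQ.2 k n with h | h <;> simp [h]⟩

theorem convex_softAssignments : Convex ℝ (softAssignments κ ι) := by
  rintro Q ⟨hQ1, hQ0⟩ R ⟨hR1, hR0⟩ a b ha hb hab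
  refine ⟨fun n => ?_, fun k n => ?_⟩
  · simp [sum_add_distrib, ← mul_sum, hQ1, hR1, hab]
  · have := hQ0 k n
    have := hR0 k n
    simp only [Pi.add_apply, Pi.smul_apply, smul_eq_mul]
    positivity

theorem exists_eq_one_of_mem_hardAssignments (hQ : Q ∈ hardAssignments κ ι) (n : ι) :
    ∃ k, Q k n = 1 := by
  by_contra! h
  have := hQ.1 n
  rw [sum_eq_zero fun k _ => (hQ.2 k n).resolve_right (h k)] at this
  exact zero_ne_one this

theorem eq_zero_of_mem_hardAssignments (hQ : Q ∈ hardAssignments κ ι) {k₀ k : κ} {n : ι}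
    (h₀ : Q k₀ n = 1) (hk : k ≠ k₀) : Q k n = 0 := by
  classical
  have hsum := hQ.1 n
  rw [← add_sum_erase _ _ (mem_univ k₀), h₀, add_eq_left] at hsum
  exact (sum_eq_zero_iff_of_nonneg fun k _ => (hardAssignments_subset_softAssignments hQ).2 k n).1
    hsum k (mem_erase.2 ⟨hk, mem_univ k⟩)

theorem sum_mul_eq_of_mem_hardAssignments (hQ : Q ∈ hardAssignments κ ι) {k₀ : κ} {n : ι}
    (h₀ : Q k₀ n = 1) (g : κ → ℝ) : ∑ k, Q k n * g k = g k₀ := by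
  rw [sum_eq_single k₀ (fun k _ hk => by rw [eq_zero_of_mem_hardAssignments hQ h₀ hk, zero_mul])
    (by simp), h₀, one_mul]

def spliceColumn [DecidableEq ι] (Q R : κ → ι → ℝ) (n₀ : ι) : κ → ι → ℝ :=
  fun k => Function.update (Q k) n₀ (R k n₀)

theorem spliceColumn_mem_hardAssignments [DecidableEq ι] (hQ : Q ∈ hardAssignments κ ι)
    (hR : R ∈ hardAssignments κ ι) (n₀ : ι) : spliceColumn Q R n₀ ∈ hardAssignments κ ι := by
  refine ⟨fun n => ?_, fun k n => ?_⟩ <;> rcases eq_or_ne n n₀ with rfl | hn <;>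
    simp [spliceColumn, Function.update_of_ne, *, hQ.1, hR.1, hQ.2, hR.2]

def singleReassignments (P : κ → ι → ℝ) : Set (κ → ι → ℝ) :=
  {Q ∈ hardAssignments κ ι | ∃ n₀, (∀ n, n ≠ n₀ → ∀ k, Q k n = P k n) ∧ ∃ k, Q k n₀ ≠ P k n₀}

end Assignments

section Clustering

variable {κ ι E : Type*} [Fintype κ] (D : E → E → ℝ) (w : ι → ℝ) (x : ι → E)

def clusterLoss [Fintype ι] (Q : κ → ι → ℝ) (C : κ → E) : ℝ :=
  ∑ k, ∑ n, Q k n * w n * D (x n) (C k)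

def pointCost (Q : κ → ι → ℝ) (C : κ → E) (n : ι) : ℝ :=
  ∑ k, Q k n * w n * D (x n) (C k)

theorem clusterLoss_eq_sum_pointCost [Fintype ι] (Q : κ → ι → ℝ) (C : κ → E) :
    clusterLoss D w x Q C = ∑ n, pointCost D w x Q C n :=
  sum_comm

theorem pointCost_spliceColumn [DecidableEq ι] (Q R : κ → ι → ℝ) (C : κ → E) (n₀ : ι) :
    pointCost D w x (spliceColumn Q R n₀) C =
      Function.update (pointCost D w x Q C) n₀ (pointCost D w x R C n₀) := by
  funext n
  rcases eq_or_ne n n₀ with rfl | hn <;> simp [pointCost, spliceColumn, Function.update_of_ne, *]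

theorem clusterLoss_lineMap [Fintype ι] (P P' : κ → ι → ℝ) (C : κ → E) (t : ℝ) :
    clusterLoss D w x (AffineMap.lineMap P P' t) C =
      AffineMap.lineMap (clusterLoss D w x P C) (clusterLoss D w x P' C) t := by
  simp only [clusterLoss, AffineMap.lineMap_apply_module, Pi.add_apply, Pi.smul_apply,
    smul_eq_mul, add_mul, sum_add_distrib, mul_sum, mul_assoc]

def optimalAssignments [Fintype ι] (C : κ → E) : Set (κ → ι → ℝ) :=
  {Q ∈ hardAssignments κ ι |
    ∀ Q' ∈ hardAssignments κ ι, clusterLoss D w x Q C ≤ clusterLoss D w x Q' C}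

variable {D w x} [Fintype ι] {C : κ → E} {P P' Q : κ → ι → ℝ}

theorem mem_optimalAssignments_iff [DecidableEq ι] :
    Q ∈ optimalAssignments D w x C ↔ Q ∈ hardAssignments κ ι ∧
      ∀ R ∈ hardAssignments κ ι, ∀ n, pointCost D w x Q C n ≤ pointCost D w x R C n := by
  refine ⟨fun ⟨hQ, hopt⟩ => ⟨hQ, fun R hR n => ?_⟩, fun ⟨hQ, hle⟩ => ⟨hQ, fun R hR => ?_⟩⟩
  · have h := hopt _ (spliceColumn_mem_hardAssignments hQ hR n)
    rw [clusterLoss_eq_sum_pointCost, clusterLoss_eq_sum_pointCost, pointCost_spliceColumn,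
      sum_update_of_mem (mem_univ n), sum_eq_add_sum_sdiff_singleton_of_mem (mem_univ n)] at h
    linarith
  · rw [clusterLoss_eq_sum_pointCost, clusterLoss_eq_sum_pointCost]
    exact sum_le_sum fun n _ => hle R hR n

theorem nonempty_optimalAssignments_inter_singleReassignments [DecidableEq ι]
    (hP : P ∈ optimalAssignments D w x C) (hQ : Q ∈ optimalAssignments D w x C) (hQP : Q ≠ P) :
    (optimalAssignments D w x C ∩ singleReassignments P).Nonempty := by
  obtain ⟨k₀, hk₀⟩ := Function.ne_iff.1 hQP
  obtain ⟨n₀, hn₀⟩ := Function.ne_iff.1 hk₀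
  rw [mem_optimalAssignments_iff] at hP hQ
  have hmem := spliceColumn_mem_hardAssignments hP.1 hQ.1 n₀
  refine ⟨spliceColumn P Q n₀, mem_optimalAssignments_iff.2 ⟨hmem, fun R hR n => ?_⟩,
    hmem, n₀, fun n hn k => by simp [spliceColumn, hn], k₀, by simpa [spliceColumn] using hn₀⟩
  rw [pointCost_spliceColumn]
  rcases eq_or_ne n n₀ with rfl | hn
  · simpa using hQ.2 R hR n
  · simpa [hn] using hP.2 R hR n

theorem exists_reassigned_of_mem_singleReassignments [DecidableEq ι]
    (hP : P ∈ optimalAssignments D w x C)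
    (hP' : P' ∈ optimalAssignments D w x C ∩ singleReassignments P) :
    ∃ n₁ i j, i ≠ j ∧ P i n₁ = 1 ∧ P j n₁ = 0 ∧ P' j n₁ = 1 ∧
      (∀ n, n ≠ n₁ → ∀ k, P' k n = P k n) ∧
      w n₁ * D (x n₁) (C i) = w n₁ * D (x n₁) (C j) := by
  obtain ⟨hP'opt, -, n₁, hoff, k₁, hk₁⟩ := hP'
  rw [mem_optimalAssignments_iff] at hP hP'opt
  obtain ⟨i, hi⟩ := exists_eq_one_of_mem_hardAssignments hP.1 n₁
  obtain ⟨j, hj⟩ := exists_eq_one_of_mem_hardAssignments hP'opt.1 n₁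
  have hij : i ≠ j := by
    rintro rfl
    rcases eq_or_ne k₁ i with rfl | hk
    · exact hk₁ (hj.trans hi.symm)
    · exact hk₁ ((eq_zero_of_mem_hardAssignments hP'opt.1 hj hk).trans
        (eq_zero_of_mem_hardAssignments hP.1 hi hk).symm)
  have hcost := le_antisymm (hP.2 P' hP'opt.1 n₁) (hP'opt.2 P hP.1 n₁)
  simp only [pointCost, mul_assoc, sum_mul_eq_of_mem_hardAssignments hP.1 hi,
    sum_mul_eq_of_mem_hardAssignments hP'opt.1 hj] at hcost
  exact ⟨n₁, i, j, hij, hi, eq_zero_of_mem_hardAssignments hP.1 hi hij.symm, hj, hoff, hcost⟩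

end Clustering

section Centers

variable {κ ι E : Type*} [Fintype ι] [NormedAddCommGroup E] [NormedSpace ℝ E]
  {s : Set E} {φ : E → ℝ} {f' : E → E →L[ℝ] ℝ} {w : ι → ℝ} {x : ι → E}
  {C : κ → E} {P P' Q : κ → ι → ℝ}

variable (w x) in
noncomputable def clusterCenters (Q : κ → ι → ℝ) (k : κ) : E :=
  univ.centerMass (fun n => Q k n * w n) x

variable (w x) in
/-- Empty clusters keep their old center, where `clusterCenters` would give the junk value `0`. -/
noncomputable def updateCenters (Q : κ → ι → ℝ) (C : κ → E) (k : κ) : E :=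
  if 0 < ∑ n, Q k n * w n then clusterCenters w x Q k else C k

theorem updateCenters_mem (hs : Convex ℝ s) (hQ : ∀ k n, 0 ≤ Q k n) (hw : ∀ n, 0 ≤ w n)
    (hx : ∀ n, x n ∈ s) (hC : ∀ k, C k ∈ s) (k : κ) : updateCenters w x Q C k ∈ s := by
  unfold updateCenters
  split_ifs with h
  · exact hs.centerMass_mem (fun n _ => mul_nonneg (hQ k n) (hw n)) h fun n _ => hx n
  · exact hC k

theorem sum_mul_bregmanDiv_updateCenters_le (hφ : ConvexOn ℝ s φ)
    (hdiff : ∀ y ∈ s, HasFDerivAt φ (f' y) y) (hQ : ∀ k n, 0 ≤ Q k n) (hw : ∀ n, 0 ≤ w n)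
    (hx : ∀ n, x n ∈ s) (hC : ∀ k, C k ∈ s) (k : κ) :
    ∑ n, Q k n * w n * bregmanDiv φ f' (x n) (updateCenters w x Q C k) ≤
      ∑ n, Q k n * w n * bregmanDiv φ f' (x n) (C k) := by
  unfold updateCenters
  split_ifs with h
  · exact sum_mul_bregmanDiv_centerMass_le hφ (fun n => mul_nonneg (hQ k n) (hw n)) h hx
      (hC k) (hdiff _ (hC k))
  · exact le_rfl

theorem clusterLoss_updateCenters_le [Fintype κ] (hφ : ConvexOn ℝ s φ)
    (hdiff : ∀ y ∈ s, HasFDerivAt φ (f' y) y) (hQ : ∀ k n, 0 ≤ Q k n) (hw : ∀ n, 0 ≤ w n)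
    (hx : ∀ n, x n ∈ s) (hC : ∀ k, C k ∈ s) :
    clusterLoss (bregmanDiv φ f') w x Q (updateCenters w x Q C) ≤
      clusterLoss (bregmanDiv φ f') w x Q C :=
  sum_le_sum fun k _ => sum_mul_bregmanDiv_updateCenters_le hφ hdiff hQ hw hx hC k

theorem clusterLoss_clusterCenters_le [Fintype κ] (hφ : ConvexOn ℝ s φ)
    (hdiff : ∀ y ∈ s, HasFDerivAt φ (f' y) y) (hQ : ∀ k n, 0 ≤ Q k n) (hw : ∀ n, 0 ≤ w n)
    (hx : ∀ n, x n ∈ s) (hmass : ∀ k, 0 < ∑ n, Q k n * w n) (hC : ∀ k, C k ∈ s) :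
    clusterLoss (bregmanDiv φ f') w x Q (clusterCenters w x Q) ≤
      clusterLoss (bregmanDiv φ f') w x Q C := by
  have hupdate : updateCenters w x Q C = clusterCenters w x Q := funext fun k => if_pos (hmass k)
  exact hupdate ▸ clusterLoss_updateCenters_le hφ hdiff hQ hw hx hC

theorem clusterLoss_updateCenters_lt [Fintype κ] (hφ : StrictConvexOn ℝ s φ)
    (hdiff : ∀ y ∈ s, HasFDerivAt φ (f' y) y) (hQ : ∀ k n, 0 ≤ Q k n) (hw : ∀ n, 0 ≤ w n)
    (hx : ∀ n, x n ∈ s) (hC : ∀ k, C k ∈ s) {j : κ} (hj : 0 < ∑ n, Q j n * w n)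
    (hne : clusterCenters w x Q j ≠ C j) :
    clusterLoss (bregmanDiv φ f') w x Q (updateCenters w x Q C) <
      clusterLoss (bregmanDiv φ f') w x Q C := by
  refine sum_lt_sum
    (fun k _ => sum_mul_bregmanDiv_updateCenters_le hφ.convexOn hdiff hQ hw hx hC k)
    ⟨j, mem_univ j, ?_⟩
  rw [updateCenters, if_pos hj]
  exact sum_mul_bregmanDiv_centerMass_lt hφ (fun n => mul_nonneg (hQ j n) (hw n)) hj hx (hC j)
    (hdiff _ (hC j)) hne

theorem exists_clusterLoss_lineMap_lt [Fintype κ] [DecidableEq ι] (hφ : StrictConvexOn ℝ s φ)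
    (hdiff : ∀ y ∈ s, HasFDerivAt φ (f' y) y) (hx : ∀ n, x n ∈ s) (hw : ∀ n, 0 < w n)
    (hmass : ∀ k, 0 < ∑ n, P k n * w n) (hC : ∀ k, clusterCenters w x P k ∈ s)
    (hinj : Function.Injective (clusterCenters w x P))
    (hP : P ∈ optimalAssignments (bregmanDiv φ f') w x (clusterCenters w x P))
    (hP' : P' ∈ optimalAssignments (bregmanDiv φ f') w x (clusterCenters w x P) ∩
      singleReassignments P)
    {t : ℝ} (ht : t ∈ Set.Ioc 0 1) :
    ∃ C', (∀ k, C' k ∈ s) ∧ clusterLoss (bregmanDiv φ f') w x (AffineMap.lineMap P P' t) C' <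
      clusterLoss (bregmanDiv φ f') w x P (clusterCenters w x P) := by
  obtain ⟨n₁, i, j, hij, -, hPj, hP'j, hoff, hcost⟩ :=
    exists_reassigned_of_mem_singleReassignments hP hP'
  set C := clusterCenters w x P
  have hzero (k : κ) : bregmanDiv φ f' (x n₁) (C k) = 0 ↔ x n₁ = C k :=
    bregmanDiv_eq_zero_iff hφ (hC k) (hx n₁) (hdiff _ (hC k))
  have hxj : x n₁ ≠ C j := by
    intro hxj
    rw [(hzero j).2 hxj, mul_zero, mul_eq_zero, or_iff_right (hw n₁).ne', hzero i] at hcost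
    exact hij (hinj (hcost.symm.trans hxj))
  set Q := AffineMap.lineMap P P' t
  have hQ : Q ∈ softAssignments κ ι :=
    convex_softAssignments.lineMap_mem (hardAssignments_subset_softAssignments hP.1)
      (hardAssignments_subset_softAssignments hP'.1.1) (Set.Ioc_subset_Icc_self ht)
  have htw : 0 < t * w n₁ := mul_pos ht.1 (hw n₁)
  have hrow : (fun n => Q j n * w n) = (fun n => P j n * w n) + Pi.single n₁ (t * w n₁) := by
    funext n
    rcases eq_or_ne n n₁ with rfl | hn
    · simp [Q, AffineMap.lineMap_apply_module', hPj, hP'j]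
    · simp [Q, AffineMap.lineMap_apply_module', hoff n hn, hn]
  have hQmass : 0 < ∑ n, Q j n * w n := by
    rw [hrow]
    simpa [sum_add_distrib] using add_pos (hmass j) htw
  have hQne : clusterCenters w x Q j ≠ C j := by
    rw [clusterCenters, hrow]
    exact centerMass_add_single_ne (hmass j).ne' (add_pos (hmass j) htw).ne' htw.ne' hxj
  have hw' (n : ι) : 0 ≤ w n := (hw n).le
  refine ⟨updateCenters w x Q C, updateCenters_mem hφ.1 hQ.2 hw' hx hC, ?_⟩
  calc clusterLoss (bregmanDiv φ f') w x Q (updateCenters w x Q C)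
      < clusterLoss (bregmanDiv φ f') w x Q C :=
        clusterLoss_updateCenters_lt hφ hdiff hQ.2 hw' hx hC hQmass hQne
    _ = clusterLoss (bregmanDiv φ f') w x P C := by
        rw [clusterLoss_lineMap, le_antisymm (hP'.1.2 P hP.1) (hP.2 P' hP'.1.1),
          AffineMap.lineMap_same_apply]

end Centers

theorem multiple_optimal_assignments_decrease_general {d K N : ℕ}
    (dom : Set (Fin d → ℝ))
    (φ : (Fin d → ℝ) → ℝ) (hφ : StrictConvexOn ℝ dom φ)
    (f' : (Fin d → ℝ) → (Fin d → ℝ) →L[ℝ] ℝ)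
    (hdiff : ∀ y ∈ interior dom, HasFDerivAt φ (f' y) y)
    (D : (Fin d → ℝ) → (Fin d → ℝ) → ℝ)
    (hD : ∀ x y, D x y = φ x - φ y - f' y (x - y))
    (x : Fin N → (Fin d → ℝ)) (hx : ∀ n, x n ∈ interior dom)
    (w : Fin N → ℝ) (hw : ∀ n, 0 < w n)
    (f : (Fin K → Fin N → ℝ) → (Fin K → (Fin d → ℝ)) → ℝ)
    (hf : ∀ P C, f P C = ∑ k, ∑ n, P k n * w n * D (x n) (C k))
    (F : (Fin K → Fin N → ℝ) → ℝ)
    (hF : ∀ P, IsLeast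
      {v | ∃ C : Fin K → (Fin d → ℝ), (∀ k, C k ∈ interior dom) ∧ v = f P C} (F P))
    (S1 : Set (Fin K → Fin N → ℝ))
    (hS1 : S1 = {P | (∀ n, ∑ k, P k n = 1) ∧ ∀ k n, P k n = 0 ∨ P k n = 1})
    (P : Fin K → Fin N → ℝ)
    (hnonempty : ∀ k, ∃ n, P k n = 1)
    (Cstar : Fin K → (Fin d → ℝ))
    (hCstar : ∀ k, Cstar k = (∑ n, P k n * w n)⁻¹ • ∑ n, (P k n * w n) • x n)
    (hCint : ∀ k, Cstar k ∈ interior dom)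
    (hdistinct : Function.Injective Cstar)
    (A : Set (Fin K → Fin N → ℝ))
    (hA : A = {Q ∈ S1 | ∀ Q' ∈ S1, f Q Cstar ≤ f Q' Cstar})
    (hPA : P ∈ A)
    (T : Set (Fin K → Fin N → ℝ))
    (hT : T = {Q ∈ S1 | ∃ n₀ : Fin N,
      (∀ n, n ≠ n₀ → ∀ k, Q k n = P k n) ∧ ∃ k, Q k n₀ ≠ P k n₀}) :
    (A.Nontrivial → (A ∩ T).Nonempty ∧ ∀ P' ∈ A ∩ T, F P' < F P) ∧
    ((∃ ε > 0, ∀ Q : Fin K → Fin N → ℝ,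
        ((∀ n, ∑ k, Q k n = 1) ∧ ∀ k n, 0 ≤ Q k n) → dist Q P < ε → F P ≤ F Q) →
      A = {P}) := by
  obtain rfl : D = bregmanDiv φ f' := funext₂ hD
  obtain rfl : f = clusterLoss (bregmanDiv φ f') w x := funext₂ hf
  obtain rfl : S1 = hardAssignments (Fin K) (Fin N) := hS1
  obtain rfl : Cstar = clusterCenters w x P := funext hCstar
  obtain rfl : A = optimalAssignments (bregmanDiv φ f') w x (clusterCenters w x P) := hA
  obtain rfl : T = singleReassignments P := hT
  set A := optimalAssignments (bregmanDiv φ f') w x (clusterCenters w x P)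
  set T := singleReassignments P
  have hφ' : StrictConvexOn ℝ (interior dom) φ := hφ.subset interior_subset hφ.1.interior
  have hP0 := (hardAssignments_subset_softAssignments hPA.1).2
  have hmass (k : Fin K) : 0 < ∑ n, P k n * w n := by
    obtain ⟨n, hn⟩ := hnonempty k
    exact sum_pos' (fun m _ => mul_nonneg (hP0 k m) (hw m).le)
      ⟨n, mem_univ n, by simpa [hn] using hw n⟩
  have hFP : F P = clusterLoss (bregmanDiv φ f') w x P (clusterCenters w x P) := by
    obtain ⟨C₀, hC₀, hFC₀⟩ := (hF P).1
    exact le_antisymm ((hF P).2 ⟨_, hCint, rfl⟩) (hFC₀ ▸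
      clusterLoss_clusterCenters_le hφ'.convexOn hdiff hP0 (fun n => (hw n).le) hx hmass hC₀)
  have hdecrease : ∀ P' ∈ A ∩ T, ∀ t ∈ Set.Ioc (0 : ℝ) 1, F (AffineMap.lineMap P P' t) < F P := by
    intro P' hP' t ht
    obtain ⟨C', hC', hlt⟩ :=
      exists_clusterLoss_lineMap_lt hφ' hdiff hx hw hmass hCint hdistinct hPA hP' ht
    exact hFP ▸ ((hF _).2 ⟨C', hC', rfl⟩).trans_lt hlt
  refine ⟨fun hA => ⟨?_, fun P' hP' => by simpa using hdecrease P' hP' 1 ⟨one_pos, le_rfl⟩⟩, ?_⟩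
  · obtain ⟨R, hR, hRP⟩ := hA.exists_ne P
    exact nonempty_optimalAssignments_inter_singleReassignments hPA hR hRP
  · rintro ⟨ε, hε, hloc⟩
    refine Set.eq_singleton_iff_unique_mem.2 ⟨hPA, fun R hR => by_contra fun hRP => ?_⟩
    obtain ⟨P', hP'⟩ := nonempty_optimalAssignments_inter_singleReassignments hPA hR hRP
    obtain ⟨t, ht, hdist⟩ := exists_mem_Ioc_dist_lineMap_lt P P' hε
    have hsoft := convex_softAssignments.lineMap_mem (hardAssignments_subset_softAssignments hPA.1)
      (hardAssignments_subset_softAssignments hP'.1.1) (Set.Ioc_subset_Icc_self ht)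
    exact (hloc _ hsoft hdist).not_gt (hdecrease P' hP' t ht)

/-- Suppose all cluster centers `C*_P` (the weighted means of the
non-empty clusters of the optimal assignment `P`) are distinct.  If the set `A(C*_P)`
of optimal 0/1 assignments for the fixed centers `C*_P` contains more than one element,
then `A(C*_P) ∩ T(P)` is nonempty and transitioning to any `P' ∈ A(C*_P) ∩ T(P)`
strictly decreases the clustering loss `F`.  In particular, if `(P, C*_P)` is C-local
then `A(C*_P)` is a singleton. -/
theorem multiple_optimal_assignments_decrease {d K N : ℕ}
    (dom : Set (Fin d → ℝ)) (hdom : Convex ℝ dom)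
    (φ : (Fin d → ℝ) → ℝ) (hφ : StrictConvexOn ℝ dom φ)
    (f' : (Fin d → ℝ) → (Fin d → ℝ) →L[ℝ] ℝ)
    (hdiff : ∀ y ∈ interior dom, HasFDerivAt φ (f' y) y)
    (D : (Fin d → ℝ) → (Fin d → ℝ) → ℝ)
    (hD : ∀ x y, D x y = φ x - φ y - f' y (x - y))
    (x : Fin N → (Fin d → ℝ)) (hx : ∀ n, x n ∈ interior dom)
    (hxinj : Function.Injective x)
    (w : Fin N → ℝ) (hw : ∀ n, 0 < w n)
    (f : (Fin K → Fin N → ℝ) → (Fin K → (Fin d → ℝ)) → ℝ)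
    (hf : ∀ P C, f P C = ∑ k, ∑ n, P k n * w n * D (x n) (C k))
    (F : (Fin K → Fin N → ℝ) → ℝ)
    (hF : ∀ P, IsLeast
      {v | ∃ C : Fin K → (Fin d → ℝ), (∀ k, C k ∈ interior dom) ∧ v = f P C} (F P))
    (S1 : Set (Fin K → Fin N → ℝ))
    (hS1 : S1 = {P | (∀ n, ∑ k, P k n = 1) ∧ ∀ k n, P k n = 0 ∨ P k n = 1})
    (P : Fin K → Fin N → ℝ) (hPS1 : P ∈ S1)
    (hnonempty : ∀ k, ∃ n, P k n = 1)
    (Cstar : Fin K → (Fin d → ℝ))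
    (hCstar : ∀ k, Cstar k = (∑ n, P k n * w n)⁻¹ • ∑ n, (P k n * w n) • x n)
    (hCint : ∀ k, Cstar k ∈ interior dom)
    (hdistinct : Function.Injective Cstar)
    (A : Set (Fin K → Fin N → ℝ))
    (hA : A = {Q ∈ S1 | ∀ Q' ∈ S1, f Q Cstar ≤ f Q' Cstar})
    (hPA : P ∈ A)
    (T : Set (Fin K → Fin N → ℝ))
    (hT : T = {Q ∈ S1 | ∃ n₀ : Fin N,
      (∀ n, n ≠ n₀ → ∀ k, Q k n = P k n) ∧ ∃ k, Q k n₀ ≠ P k n₀}) :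
    (A.Nontrivial → (A ∩ T).Nonempty ∧ ∀ P' ∈ A ∩ T, F P' < F P) ∧
    ((∃ ε > 0, ∀ Q : Fin K → Fin N → ℝ,
        ((∀ n, ∑ k, Q k n = 1) ∧ ∀ k n, 0 ≤ Q k n) → dist Q P < ε → F P ≤ F Q) →
      A = {P}) :=
  multiple_optimal_assignments_decrease_general dom φ hφ f' hdiff D hD x hx w hw f hf F hF S1 hS1 P
    hnonempty Cstar hCstar hCint hdistinct A hA hPA T hT
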